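/- Given constants b, μ, L ≥ 0 with 0 < μ ≤ L, ν ∈ (0,1), and positive integers n, m, there exist λ ∈ (0,1) and 0 < d_min < d_max such that: (1) ν < λ^m; (2) d_min/n < 2/L; (3) 1 − μ d_min + ΔL < λ where Δ = d_max − d_min; (4) γβ₂ < 1; (5) β₃ < 1; (6) β₅γ/(1−β₃) < 1; (7) ((β₁+γβ₂)/(1−γβ₂))·((β₄+γβ₅)/(1−β₃−γβ₅)) < 1, where C = λ(1−λ^m)/(1−λ), γ = (b+L)C/(λ^m−ν), β₁ = L d_max/(λ−1+μ d_min−ΔL), β₂ = (Δ/(L d_max))β₁, β₅ = C d_max/λ^m, β₄ = Lβ₅, β₃ = ν/λ^m + β₄. -/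

import Mathlib

set_option maxHeartbeats 2000000 in
/-- Existence of step-size safeguards and rate parameter satisfying the
seven conditions of Lemma 3. -/
theorem exists_safeguards (b μ L ν : ℝ) (n m : ℕ)
    (hb : 0 ≤ b) (hμ : 0 < μ) (hμL : μ ≤ L) (hν : ν ∈ Set.Ioo (0:ℝ) 1)
    (hn : 0 < n) (hm : 0 < m) :
    ∃ lam d_min d_max : ℝ, lam ∈ Set.Ioo (0:ℝ) 1 ∧ 0 < d_min ∧ d_min < d_max ∧
      let Δ := d_max - d_min
      let C := lam * (1 - lam^m) / (1 - lam)
      let γ := (b + L) * C / (lam^m - ν)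
      let β₁ := L * d_max / (lam - 1 + μ * d_min - Δ * L)
      let β₂ := (Δ / (L * d_max)) * β₁
      let β₅ := C * d_max / lam^m
      let β₄ := L * β₅
      let β₃ := ν / lam^m + β₄
      ν < lam^m ∧
      d_min / n < 2 / L ∧
      1 - μ * d_min + Δ * L < lam ∧
      γ * β₂ < 1 ∧
      β₃ < 1 ∧
      β₅ * γ / (1 - β₃) < 1 ∧
      ((β₁ + γ * β₂) / (1 - γ * β₂)) * ((β₄ + γ * β₅) / (1 - β₃ - γ * β₅)) < 1 := by
  obtain ⟨hν0, hν1⟩ := hν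
  have hL : 0 < L := lt_of_lt_of_le hμ hμL
  have hbL : 0 < b + L := by linarith
  have hm1 : (1:ℝ) ≤ (m:ℝ) := by exact_mod_cast hm
  have hmpos : (0:ℝ) < (m:ℝ) := by linarith
  have hν' : 0 < 1 - ν := by linarith
  have hμ2 : 0 < 2/μ + 1 := by
    have : 0 < 2/μ := div_pos two_pos hμ
    linarith
  obtain ⟨B1, hB1def⟩ : ∃ x : ℝ, x = 2*L*(2/μ+1) := ⟨_, rfl⟩
  obtain ⟨B5, hB5def⟩ : ∃ x : ℝ, x = 2*(m:ℝ)*(2/μ+1) := ⟨_, rfl⟩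
  obtain ⟨G, hGdef⟩ : ∃ x : ℝ, x = 2*(b+L)*(m:ℝ)/(1-ν) := ⟨_, rfl⟩
  have hB1 : 0 < B1 := by rw [hB1def]; exact mul_pos (by linarith) hμ2
  have hB5 : 0 < B5 := by rw [hB5def]; exact mul_pos (by linarith) hμ2
  have hG : 0 < G := by rw [hGdef]; exact div_pos (by nlinarith) hν'
  obtain ⟨Q, hQdef⟩ : ∃ x : ℝ, x = 2*(B1+1)*(2*(L+G)*B5) := ⟨_, rfl⟩
  have hQ : 0 < Q := by rw [hQdef]; exact mul_pos (by linarith) (mul_pos (by linarith) hB5)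
  have hLμ : 0 < L/μ := div_pos hL hμ
  have hLB5 : 0 < L*B5 := mul_pos hL hB5
  have hGB5 : 0 < G*B5 := mul_pos hG hB5
  obtain ⟨P, hPdef⟩ : ∃ x : ℝ, x = 2 + L + L/μ + L*B5 + G + G*B5 + Q := ⟨_, rfl⟩
  have hP : 0 < P := by rw [hPdef]; positivity
  obtain ⟨ε, hεdef⟩ : ∃ x : ℝ, x = (1-ν)/(16*P) := ⟨_, rfl⟩
  have hε : 0 < ε := by rw [hεdef]; exact div_pos hν' (by linarith)
  have hPε : P * ε = (1-ν)/16 := by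
    rw [hεdef]
    field_simp
  have hkey : ∀ X : ℝ, 0 ≤ X → X ≤ P → X * ε ≤ (1-ν)/16 := by
    intro X hX0 hXP
    calc X * ε ≤ P * ε := mul_le_mul_of_nonneg_right hXP hε.le
      _ = (1-ν)/16 := hPε
  have hε1 : ε ≤ (1-ν)/16 := by
    have h := hkey 1 zero_le_one (by linarith)
    linarith [h]
  have hεhalf : ε ≤ 1/16 := by linarith
  have hε1' : ε < 1 := by linarith
  have hεν : ε < 1 - ν := by linarith
  have hLε : L*ε ≤ 1/16 := le_trans (hkey L hL.le (by linarith)) (by linarith)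
  have hLμε : (L/μ)*ε ≤ 1/16 := le_trans (hkey (L/μ) hLμ.le (by linarith)) (by linarith)
  have hLεμ : L*ε ≤ μ/16 := by
    have h : L*ε/μ ≤ 1/16 := by rw [← div_mul_eq_mul_div]; exact hLμε
    rw [div_le_div_iff₀ hμ (by norm_num : (0:ℝ) < 16)] at h
    linarith
  have hε2L : ε^2*L ≤ ε/2 := by nlinarith [mul_le_mul_of_nonneg_left hLε hε.le, hε]
  -- the rate parameter
  have h1ε : 0 < 1 - ε := by linarith
  obtain ⟨lam, hlamdef⟩ : ∃ x : ℝ, x = (1-ε) ^ ((m:ℝ)⁻¹) := ⟨_, rfl⟩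
  have hlam0 : 0 < lam := by rw [hlamdef]; exact Real.rpow_pos_of_pos h1ε _
  have hlam1 : lam < 1 := by rw [hlamdef]; exact Real.rpow_lt_one h1ε.le (by linarith) (inv_pos.mpr hmpos)
  have hlampow : lam ^ m = 1 - ε := by
    rw [hlamdef, ← Real.rpow_natCast ((1-ε) ^ ((m:ℝ)⁻¹)) m, ← Real.rpow_mul h1ε.le,
      inv_mul_cancel₀ (ne_of_gt hmpos), Real.rpow_one]
  have hlamge : 1 - ε ≤ lam := by
    have h := pow_le_pow_of_le_one hlam0.le hlam1.le hm
    rw [pow_one, hlampow] at h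
    exact h
  have h1lam : 0 < 1 - lam := by linarith
  have hbern : ε ≤ (m:ℝ) * (1 - lam) := by
    have h := one_add_mul_le_pow (by linarith : (-2:ℝ) ≤ lam - 1) m
    have h2 : (1 + (lam - 1)) = lam := by ring
    rw [h2, hlampow] at h
    linarith [h]
  -- the step sizes
  have hdmn : 0 < 2*ε/μ := div_pos (by linarith) hμ
  have hdmx : 0 < 2*ε/μ + ε^2 := by positivity
  have hdmx_le : 2*ε/μ + ε^2 ≤ (2/μ+1)*ε := by
    have h : (2/μ+1)*ε - (2*ε/μ + ε^2) = ε*(1-ε) := by field_simp; ring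
    nlinarith [mul_nonneg hε.le (sub_nonneg.mpr hε1'.le), h]
  refine ⟨lam, 2*ε/μ, 2*ε/μ + ε^2, Set.mem_Ioo.mpr ⟨hlam0, hlam1⟩, hdmn,
    (lt_add_iff_pos_right _).mpr (by positivity), ?_⟩
  intro Δ C γ β₁ β₂ β₅ β₄ β₃
  have hΔdef : Δ = 2*ε/μ + ε^2 - (2*ε/μ) := rfl
  have hCdef : C = lam * (1 - lam^m) / (1 - lam) := rfl
  have hγdef : γ = (b + L) * C / (lam^m - ν) := rfl
  have hβ₁def : β₁ = L * (2*ε/μ + ε^2) / (lam - 1 + μ * (2*ε/μ) - Δ * L) := rfl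
  have hβ₂def : β₂ = (Δ / (L * (2*ε/μ + ε^2))) * β₁ := rfl
  have hβ₅def : β₅ = C * (2*ε/μ + ε^2) / lam^m := rfl
  have hβ₄def : β₄ = L * β₅ := rfl
  have hβ₃def : β₃ = ν / lam^m + β₄ := rfl
  clear_value Δ C γ β₁ β₂ β₅ β₄ β₃
  have hΔ : Δ = ε^2 := by rw [hΔdef]; ring
  have hμc : μ*(2*ε/μ) = 2*ε := by field_simp
  -- the denominator D
  have hD2 : ε/2 ≤ lam - 1 + μ * (2*ε/μ) - Δ * L := by
    rw [hΔ, hμc]; linarith only [hlamge, hε2L, hε]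
  have hDpos : 0 < lam - 1 + μ * (2*ε/μ) - Δ * L := by linarith
  -- C bounds
  have hC0 : 0 ≤ C := by
    rw [hCdef]
    apply div_nonneg _ h1lam.le
    rw [hlampow]
    have h : lam * (1 - (1 - ε)) = lam * ε := by ring
    rw [h]
    exact mul_nonneg hlam0.le hε.le
  have hCle : C ≤ (m:ℝ) := by
    rw [hCdef]
    rw [hlampow, div_le_iff₀ h1lam]
    have h : lam * (1 - (1 - ε)) = lam * ε := by ring
    rw [h]
    linarith only [hbern, mul_le_of_le_one_left hε.le hlam1.le]
  -- β₁ bounds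
  have hβ₁0 : 0 ≤ β₁ := by
    rw [hβ₁def]
    exact div_nonneg (mul_nonneg hL.le hdmx.le) hDpos.le
  have hβ₁ub : β₁ ≤ B1 := by
    rw [hβ₁def]
    calc L * (2*ε/μ + ε^2) / (lam - 1 + μ * (2*ε/μ) - Δ * L)
        ≤ L * ((2/μ+1)*ε) / (ε/2) := by
          apply div_le_div₀ (by positivity) (mul_le_mul_of_nonneg_left hdmx_le hL.le)
            (by linarith) hD2
      _ = B1 := by rw [hB1def]; field_simp
  -- β₂ bounds
  have hβ₂eq : β₂ = Δ / (lam - 1 + μ * (2*ε/μ) - Δ * L) := by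
    rw [hβ₂def, hβ₁def]
    rw [div_mul_div_comm, mul_comm Δ (L * (2*ε/μ + ε^2)),
      mul_div_mul_left _ _ (ne_of_gt (mul_pos hL hdmx))]
  have hβ₂0 : 0 ≤ β₂ := by
    rw [hβ₂eq, hΔ]
    exact div_nonneg (by positivity) (by rw [← hΔ]; exact hDpos.le)
  have hβ₂ub : β₂ ≤ 2*ε := by
    rw [hβ₂eq]
    calc Δ / (lam - 1 + μ * (2*ε/μ) - Δ * L) ≤ ε^2 / (ε/2) := by
          rw [hΔ]
          apply div_le_div₀ (by positivity) le_rfl (by linarith) (by rw [← hΔ]; exact hD2)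
      _ = 2*ε := by field_simp
  -- γ bounds
  have hmν : 0 < lam ^ m - ν := by rw [hlampow]; linarith
  have hγ0 : 0 ≤ γ := by
    rw [hγdef]
    exact div_nonneg (mul_nonneg hbL.le hC0) hmν.le
  have hden : (1-ν)/2 ≤ 1 - ε - ν := by linarith
  have hγub : γ ≤ G := by
    rw [hγdef]
    rw [hlampow]
    calc (b + L) * C / (1 - ε - ν) ≤ (b+L)*(m:ℝ) / ((1-ν)/2) := by
          apply div_le_div₀ (by positivity) (mul_le_mul_of_nonneg_left hCle hbL.le)
            (by linarith) hden
      _ = G := by rw [hGdef]; field_simp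
  -- β₅ bounds
  have hβ₅0 : 0 ≤ β₅ := by
    rw [hβ₅def]
    rw [hlampow]
    exact div_nonneg (mul_nonneg hC0 hdmx.le) h1ε.le
  have hβ₅ub : β₅ ≤ B5*ε := by
    rw [hβ₅def]
    rw [hlampow]
    calc C * (2*ε/μ + ε^2) / (1 - ε)
        ≤ (m:ℝ) * ((2/μ+1)*ε) / (1/2) := by
          apply div_le_div₀ (by positivity)
            (mul_le_mul hCle hdmx_le hdmx.le hmpos.le) (by norm_num) (by linarith)
      _ = B5*ε := by rw [hB5def]; ring
  -- β₄ bounds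
  have hβ₄0 : 0 ≤ β₄ := by
    rw [hβ₄def]
    exact mul_nonneg hL.le hβ₅0
  have hβ₄ub : β₄ ≤ L*B5*ε := by
    rw [hβ₄def]
    linarith only [mul_le_mul_of_nonneg_left hβ₅ub hL.le]
  -- β₃ bounds
  have hνdiv : ν/(1-ε) ≤ ν + 2*ε := by
    rw [div_le_iff₀ h1ε]
    linarith only [mul_nonneg hν'.le hε.le,
      mul_le_mul_of_nonneg_left hεhalf hε.le, hε, hν0, hν1]
  have hβ₃ub : β₃ ≤ ν + (2+L*B5)*ε := by
    rw [hβ₃def]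
    rw [hlampow]
    linarith only [hνdiv, hβ₄ub]
  have hβ₃0 : 0 ≤ β₃ := by
    rw [hβ₃def]
    rw [hlampow]
    have : 0 ≤ ν/(1-ε) := div_nonneg hν0.le h1ε.le
    linarith [hβ₄0]
  have h2LB5ε : (2+L*B5)*ε ≤ (1-ν)/16 := hkey _ (by linarith) (by linarith)
  have hβ₃1 : β₃ < 1 := by linarith only [hβ₃ub, h2LB5ε, hν']
  -- products
  have hGε : G*ε ≤ (1-ν)/16 := hkey G hG.le (by linarith)
  have hγβ₂ : γ*β₂ ≤ 1/8 := by
    linarith only [mul_le_mul hγub hβ₂ub hβ₂0 hG.le, hGε, hν0]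
  have hγβ₅ : γ*β₅ ≤ G*(B5*ε) := mul_le_mul hγub hβ₅ub hβ₅0 hG.le
  have hGB5ε : (G*B5)*ε ≤ (1-ν)/16 := hkey _ (by linarith) (by linarith)
  have h2all : (2+L*B5+G*B5)*ε ≤ (1-ν)/16 := hkey _ (by linarith) (by linarith)
  have h1β₃γ : (1-ν)/2 ≤ 1 - β₃ - γ*β₅ := by linarith only [hβ₃ub, hγβ₅, h2all, hν']
  have h1β₃ : (1-ν)/2 ≤ 1 - β₃ := by linarith only [hβ₃ub, h2LB5ε, hν']
  refine ⟨?_, ?_, ?_, ?_, hβ₃1, ?_, ?_⟩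
  · -- condition 1
    rw [hlampow]; linarith
  · -- condition 2
    have h1 : 2*ε/μ/(n:ℝ) ≤ 2*ε/μ :=
      div_le_self hdmn.le (by exact_mod_cast hn)
    have h2 : 2*ε/μ < 2/L := by
      rw [div_lt_div_iff₀ hμ hL]
      linarith only [hLεμ, hμ]
    linarith
  · -- condition 3
    rw [hΔ, hμc]
    linarith only [hlamge, hε2L, hε]
  · -- condition 4
    linarith [hγβ₂]
  · -- condition 6
    rw [div_lt_one (by linarith : (0:ℝ) < 1 - β₃)]
    linarith only [mul_le_mul hβ₅ub hγub hγ0 (by positivity : (0:ℝ) ≤ B5*ε), hGB5ε, hν', hν0, h1β₃]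
  · -- condition 7
    have hf1 : (β₁ + γ * β₂) / (1 - γ * β₂) ≤ 2*(B1+1) := by
      calc (β₁ + γ * β₂) / (1 - γ * β₂) ≤ (B1+1)/(1/2) := by
            apply div_le_div₀ (by linarith) (by linarith) (by norm_num) (by linarith)
        _ = 2*(B1+1) := by ring
    have hf20 : 0 ≤ (β₄ + γ * β₅) / (1 - β₃ - γ * β₅) :=
      div_nonneg (by linarith only [hβ₄0, mul_nonneg hγ0 hβ₅0]) (by linarith)
    have hf2 : (β₄ + γ * β₅) / (1 - β₃ - γ * β₅) ≤ ((L+G)*B5*ε)/((1-ν)/2) := by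
      apply div_le_div₀ (by positivity) (by linarith only [hβ₄ub, hγβ₅]) (by linarith) h1β₃γ
    have hQε : Q*ε ≤ (1-ν)/16 := hkey Q hQ.le (by linarith)
    have hmain : ((β₁ + γ * β₂) / (1 - γ * β₂)) * ((β₄ + γ * β₅) / (1 - β₃ - γ * β₅))
        ≤ 2*(B1+1) * (((L+G)*B5*ε)/((1-ν)/2)) :=
      mul_le_mul hf1 hf2 hf20 (by linarith)
    have heq : 2*(B1+1) * (((L+G)*B5*ε)/((1-ν)/2)) = Q*ε/(1-ν) := by
      rw [hQdef]; field_simp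
    have hfin : Q*ε/(1-ν) < 1 := by
      rw [div_lt_one hν']
      linarith
    linarith only [heq ▸ hmain, hfin]
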